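/- arXiv:2401.13239 — 3 statements merged into one kernel-verified Lean document; each statement's English description precedes it below -/
import Mathlib

section
/- Let K ≥ 2, let S be a K×K real symmetric positive definite matrix, and let v̄ > 0. Define ν = v̄ · S⁻¹𝟏 ∈ ℝ^K. Then for every k ∈ {1,…,K}, ν_k = v̄ · (1 − 𝟏ᵀ u^{(k)}(S)) / ℓ^{(k)}(S). -/
open Matrix Finset

/-- The `(K-1)×(K-1)` submatrix of `S` obtained by deleting row `k` and column `k`,
indexed by `{j // j ≠ k}`. -/
noncomputable def minorDel {K : ℕ} (S : Matrix (Fin K) (Fin K) ℝ) (k : Fin K) :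
    Matrix {j : Fin K // j ≠ k} {j : Fin K // j ≠ k} ℝ :=
  Matrix.of fun i j => S i.1 j.1

/-- Column `k` of `S` with its `k`-th entry deleted. -/
noncomputable def colDel {K : ℕ} (S : Matrix (Fin K) (Fin K) ℝ) (k : Fin K) :
    {j : Fin K // j ≠ k} → ℝ :=
  fun i => S i.1 k

/-- Row `k` of `S` with its `k`-th entry deleted. -/
noncomputable def rowDel {K : ℕ} (S : Matrix (Fin K) (Fin K) ℝ) (k : Fin K) :
    {j : Fin K // j ≠ k} → ℝ :=
  fun j => S k j.1

/-- The leave-one-out regression coefficients `u^{(k)}(S) = (S_{-k,-k})⁻¹ S_{-k,k}`. -/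
noncomputable def uCoef {K : ℕ} (S : Matrix (Fin K) (Fin K) ℝ) (k : Fin K) :
    {j : Fin K // j ≠ k} → ℝ :=
  (minorDel S k)⁻¹ *ᵥ colDel S k

/-- The Schur complement `ℓ^{(k)}(S) = S_{k,k} − S_{k,-k} (S_{-k,-k})⁻¹ S_{-k,k}`. -/
noncomputable def ellCoef {K : ℕ} (S : Matrix (Fin K) (Fin K) ℝ) (k : Fin K) : ℝ :=
  S k k - rowDel S k ⬝ᵥ ((minorDel S k)⁻¹ *ᵥ colDel S k)


section Aux
open Matrix Finset

lemma sum_split {K : ℕ} (k : Fin K) (f : Fin K → ℝ) :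
    ∑ j, f j = f k + ∑ j : {j : Fin K // j ≠ k}, f j.1 := by
  rw [← Finset.add_sum_erase _ f (Finset.mem_univ k)]
  congr 1
  exact Finset.sum_subtype (Finset.univ.erase k) (by simp) f

lemma minor_posDef {K : ℕ} {S : Matrix (Fin K) (Fin K) ℝ} (hS : S.PosDef) (hSsymm : S.IsSymm)
    (k : Fin K) : (minorDel S k).PosDef := by
  apply Matrix.PosDef.of_dotProduct_mulVec_pos
  · show (minorDel S k)ᴴ = _
    ext i j
    simp only [conjTranspose_apply, minorDel, of_apply, star_trivial]
    conv_rhs => rw [← hSsymm]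
    rfl
  · intro x hx
    set x' : Fin K → ℝ := fun j => if h : j = k then 0 else x ⟨j, h⟩ with hx'
    have hxk : x' k = 0 := by simp [hx']
    have hx'ne : x' ≠ 0 := by
      obtain ⟨i, hi⟩ := Function.ne_iff.mp hx
      refine Function.ne_iff.mpr ⟨i.1, ?_⟩
      simpa [hx', dif_neg i.2] using hi
    have key : star x ⬝ᵥ (minorDel S k *ᵥ x) = star x' ⬝ᵥ (S *ᵥ x') := by
      simp only [star_trivial, dotProduct, mulVec]
      rw [sum_split k (fun j => x' j * ∑ i, S j i * x' i), hxk, zero_mul, zero_add]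
      refine Finset.sum_congr rfl fun j _ => ?_
      congr 1
      · simp [hx', dif_neg j.2]
      · rw [sum_split k (fun i => S j.1 i * x' i), hxk, mul_zero, zero_add]
        refine Finset.sum_congr rfl fun i _ => ?_
        simp [hx', dif_neg i.2, minorDel]
    rw [key]
    exact hS.dotProduct_mulVec_pos hx'ne

end Aux

/-- Theorem 2 of the paper.  For a symmetric positive definite `S` and
`ν = v̄ • S⁻¹ 𝟏`, each weight satisfies `ν_k = v̄ (1 − 𝟏ᵀ u^{(k)}) / ℓ^{(k)}`. -/
theorem optimal_weights_via_ssl_params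
    (K : ℕ) (hK : 2 ≤ K)
    (S : Matrix (Fin K) (Fin K) ℝ) (hS : S.PosDef) (hSsymm : S.IsSymm)
    (vbar : ℝ) (hv : 0 < vbar)
    (ν : Fin K → ℝ) (hν : ν = vbar • (S⁻¹ *ᵥ fun _ => (1 : ℝ)))
    (k : Fin K) :
    ν k = vbar * (1 - ∑ j, uCoef S k j) / ellCoef S k := by
  classical
  set A := minorDel S k with hA
  set c := colDel S k with hc
  set u := uCoef S k with hu
  have hu' : u = A⁻¹ *ᵥ c := rfl
  have hApd := minor_posDef hS hSsymm k
  have hAdet : IsUnit A.det := isUnit_iff_ne_zero.mpr hApd.det_pos.ne'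
  have hSdet : IsUnit S.det := isUnit_iff_ne_zero.mpr hS.det_pos.ne'
  have hsym : ∀ i j, S i j = S j i := fun i j => by
    have := congrFun (congrFun hSsymm j) i
    simpa using this
  have hAT : Aᵀ = A := by
    have h := hApd.1
    ext i j
    have := congrFun (congrFun h i) j
    simpa using this
  set w : Fin K → ℝ := S⁻¹ *ᵥ (fun _ => (1 : ℝ)) with hw
  have hSw : S *ᵥ w = fun _ => (1 : ℝ) := by
    rw [hw, mulVec_mulVec, mul_nonsing_inv S hSdet, one_mulVec]
  set w' : {j : Fin K // j ≠ k} → ℝ := fun j => w j.1 with hw'def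
  -- rows i ≠ k of S w = 1
  have hrow : ∀ i : {j : Fin K // j ≠ k}, (A *ᵥ w') i = 1 - w k * c i := by
    intro i
    have h1 : ∑ j, S i.1 j * w j = 1 := by
      have := congrFun hSw i.1
      simpa [mulVec, dotProduct] using this
    rw [sum_split k (fun j => S i.1 j * w j)] at h1
    have h2 : (A *ᵥ w') i = ∑ j : {j : Fin K // j ≠ k}, S i.1 j.1 * w j.1 := by
      simp [mulVec, dotProduct, hA, minorDel, hw'def]
    have hci : c i = S i.1 k := rfl
    rw [h2, hci]
    linarith
  have hAv : A *ᵥ w' = (fun _ => (1 : ℝ)) - w k • c := by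
    funext i
    rw [hrow i]
    simp [smul_eq_mul]
  have hw'eq : w' = A⁻¹ *ᵥ (fun _ => (1 : ℝ)) - w k • (A⁻¹ *ᵥ c) := by
    have := congrArg (fun v => A⁻¹ *ᵥ v) hAv
    simpa [mulVec_mulVec, nonsing_inv_mul A hAdet, one_mulVec, mulVec_sub,
      mulVec_smul] using this
  -- the key symmetry identity
  have hrc : rowDel S k = c := by
    funext i
    exact hsym k i.1
  have hAinvT : (A⁻¹)ᵀ = A⁻¹ := by rw [transpose_nonsing_inv, hAT]
  have hkey : rowDel S k ⬝ᵥ (A⁻¹ *ᵥ fun _ => (1 : ℝ)) = ∑ j, u j := by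
    rw [hrc, dotProduct_mulVec, ← mulVec_transpose, hAinvT]
    simp [hu', dotProduct]
  -- row k of S w = 1
  have h1k : S k k * w k + rowDel S k ⬝ᵥ w' = 1 := by
    have h1 : ∑ j, S k j * w j = 1 := by
      have := congrFun hSw k
      simpa [mulVec, dotProduct] using this
    rw [sum_split k (fun j => S k j * w j)] at h1
    have : rowDel S k ⬝ᵥ w' = ∑ j : {j : Fin K // j ≠ k}, S k j.1 * w j.1 := by
      simp [rowDel, dotProduct, hw'def]
    rw [this]
    linarith
  have hmain : w k * ellCoef S k = 1 - ∑ j, u j := by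
    rw [hw'eq] at h1k
    rw [dotProduct_sub, dotProduct_smul, hkey] at h1k
    have hell : ellCoef S k = S k k - rowDel S k ⬝ᵥ (A⁻¹ *ᵥ c) := rfl
    rw [hell]
    simp only [smul_eq_mul] at h1k
    ring_nf
    ring_nf at h1k
    linarith
  -- positivity of the Schur complement
  have hAu : A *ᵥ u = c := by
    rw [hu', mulVec_mulVec, mul_nonsing_inv A hAdet, one_mulVec]
  set y : Fin K → ℝ := fun j => if h : j = k then 1 else -(u ⟨j, h⟩) with hy
  have hyk : y k = 1 := by simp [hy]
  have hyne : y ≠ 0 := fun h => by simpa [hyk] using congrFun h k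
  have hSy : ∀ i, (S *ᵥ y) i = S i k - ∑ j : {j : Fin K // j ≠ k}, S i j.1 * u j := by
    intro i
    simp only [mulVec, dotProduct]
    rw [sum_split k (fun j => S i j * y j), hyk]
    have h2 : ∑ j : {j : Fin K // j ≠ k}, S i j.1 * y j.1
        = -∑ j : {j : Fin K // j ≠ k}, S i j.1 * u j := by
      rw [← Finset.sum_neg_distrib]
      refine Finset.sum_congr rfl fun j _ => ?_
      simp [hy, dif_neg j.2]
    rw [h2]
    ring
  have hSyk : (S *ᵥ y) k = ellCoef S k := by
    rw [hSy k]
    have : ellCoef S k = S k k - rowDel S k ⬝ᵥ u := rfl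
    rw [this]
    simp [rowDel, dotProduct]
  have hSyi : ∀ i : {j : Fin K // j ≠ k}, (S *ᵥ y) i.1 = 0 := by
    intro i
    rw [hSy i.1]
    have h3 := congrFun hAu i
    have h4 : ∑ j : {j : Fin K // j ≠ k}, S i.1 j.1 * u j = S i.1 k := by
      simpa [mulVec, dotProduct, hA, minorDel, hc, colDel] using h3
    rw [h4]
    ring
  have hpos : 0 < ellCoef S k := by
    have h := hS.dotProduct_mulVec_pos hyne
    have heq : star y ⬝ᵥ (S *ᵥ y) = ellCoef S k := by
      simp only [star_trivial, dotProduct]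
      rw [sum_split k (fun i => y i * (S *ᵥ y) i), hyk, hSyk, one_mul]
      rw [Finset.sum_eq_zero (fun i _ => by rw [hSyi i, mul_zero])]
      ring
    rw [heq] at h
    exact h
  -- conclude
  have hwk : w k = (1 - ∑ j, u j) / ellCoef S k := by
    field_simp
    linarith [hmain]
  rw [hν]
  show vbar * w k = _
  rw [hwk, mul_div_assoc]
end

section
/- In the setting of the previous statement (i.i.d. centered square-integrable ℝ^K-valued Y_t with positive definite second-moment matrix S; Λ symmetric positive definite; ū ∈ ℝ; û^{(k)}_{t-1} the regularized least-squares estimator), additionally fix ℓ̄ > 0 and λ_ℓ ≥ 0, and define for t ≥ 2: ℓ̂^{(k)}_{t-1} = [ (λ_ℓ + K + 1) ℓ̄ + (û^{(k)}_{t-1} − ū𝟏)ᵀ Λ (û^{(k)}_{t-1} − ū𝟏) + Σ_{τ<t} (Y_{τ,k} − (û^{(k)}_{t-1})ᵀ Y_{τ,-k})² ] / (λ_ℓ + K + t). Then ℓ̂^{(k)}_{t-1} converges almost surely, as t → ∞, to the Schur complement ℓ^{(k)}_* = S_{k,k} − S_{k,-k} (S_{-k,-k})⁻¹ S_{-k,k}.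 -/
open Matrix Finset MeasureTheory ProbabilityTheory Filter

/-- The vector `y` with its `k`-th coordinate deleted. -/
def delVec {K : ℕ} (y : Fin K → ℝ) (k : Fin K) : {j : Fin K // j ≠ k} → ℝ :=
  fun j => y j.1

/-- The regularized least-squares estimator `û^{(k)}_{t-1}`, computed from `T = t−1`
data points. -/
noncomputable def uhatEst {K : ℕ} (k : Fin K)
    (Λ : Matrix {j : Fin K // j ≠ k} {j : Fin K // j ≠ k} ℝ) (ubar : ℝ)
    (y : ℕ → Fin K → ℝ) (T : ℕ) : {j : Fin K // j ≠ k} → ℝ :=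
  (Λ + ∑ τ ∈ Finset.range T, Matrix.vecMulVec (delVec (y τ) k) (delVec (y τ) k))⁻¹ *ᵥ
    (Λ *ᵥ (fun _ => ubar) + ∑ τ ∈ Finset.range T, y τ k • delVec (y τ) k)

/-- The Bayesian linear regression noise-variance estimator `ℓ̂^{(k)}_{t-1}`, computed
from `T = t−1` data points (so the denominator `λ_ℓ + K + t` reads `λ_ℓ + K + (T+1)`). -/
noncomputable def ellhatEst {K : ℕ} (k : Fin K)
    (Λ : Matrix {j : Fin K // j ≠ k} {j : Fin K // j ≠ k} ℝ)
    (ubar ellbar lamell : ℝ) (y : ℕ → Fin K → ℝ) (T : ℕ) : ℝ :=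
  ((lamell + K + 1) * ellbar
    + (uhatEst k Λ ubar y T - fun _ => ubar) ⬝ᵥ
        (Λ *ᵥ (uhatEst k Λ ubar y T - fun _ => ubar))
    + ∑ τ ∈ Finset.range T, (y τ k - uhatEst k Λ ubar y T ⬝ᵥ delVec (y τ) k) ^ 2)
    / (lamell + K + (T + 1))

namespace BLRAux

lemma sum_del {K : ℕ} (k : Fin K) (g : Fin K → ℝ) (hg : g k = 0) :
    ∑ i, g i = ∑ i : {j : Fin K // j ≠ k}, g i.1 := by
  rw [← Finset.add_sum_erase Finset.univ g (Finset.mem_univ k), hg, zero_add]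
  exact Finset.sum_subtype (p := fun j : Fin K => j ≠ k) (Finset.univ.erase k)
    (fun x => by simp) g

lemma vecMulVec_mulVec' {n : Type*} [Fintype n] (v w x : n → ℝ) :
    Matrix.vecMulVec v w *ᵥ x = (w ⬝ᵥ x) • v := by
  ext i
  simp only [Matrix.mulVec, dotProduct, Matrix.vecMulVec_apply, Pi.smul_apply,
    smul_eq_mul, Finset.sum_mul, Finset.mul_sum]
  exact Finset.sum_congr rfl fun j _ => by ring

lemma posSemidef_vecMulVec {n : Type*} [Fintype n] (v : n → ℝ) :
    (Matrix.vecMulVec v v).PosSemidef := by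
  refine posSemidef_iff_dotProduct_mulVec.2 ⟨?_, ?_⟩
  · ext i j
    simp [Matrix.vecMulVec_apply, Matrix.conjTranspose_apply, mul_comm]
  · intro x
    rw [vecMulVec_mulVec']
    have h2 : star x ⬝ᵥ (v ⬝ᵥ x) • v = (v ⬝ᵥ x) * (x ⬝ᵥ v) := by
      simp [dotProduct_smul, smul_eq_mul, star_trivial, mul_comm]
    rw [h2, dotProduct_comm]
    exact mul_self_nonneg _

lemma posSemidef_sum {n : Type*} [Fintype n] {ι : Type*} (s : Finset ι) (f : ι → Matrix n n ℝ)
    (hf : ∀ i ∈ s, (f i).PosSemidef) : (∑ i ∈ s, f i).PosSemidef :=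
  Finset.sum_induction f _ (fun _ _ ha hb => ha.add hb) Matrix.PosSemidef.zero hf

lemma tendsto_matrix_inv {n : Type*} [Fintype n] [DecidableEq n]
    {A : ℕ → Matrix n n ℝ} {L : Matrix n n ℝ} (hL : L.det ≠ 0)
    (hA : Tendsto A atTop (nhds L)) :
    Tendsto (fun T => (A T)⁻¹) atTop (nhds L⁻¹) := by
  have hdet : Tendsto (fun T => (A T).det) atTop (nhds L.det) :=
    ((continuous_id.matrix_det).tendsto L).comp hA
  have hadj : Tendsto (fun T => (A T).adjugate) atTop (nhds L.adjugate) :=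
    ((continuous_id.matrix_adjugate).tendsto L).comp hA
  have h := (hdet.inv₀ hL).smul hadj
  have heq : ∀ (B : Matrix n n ℝ), B⁻¹ = B.det⁻¹ • B.adjugate := by
    intro B
    rw [Matrix.inv_def, Ring.inverse_eq_inv]
  simpa only [← heq] using h

lemma tendsto_mulVec {n : Type*} [Fintype n] {A : ℕ → Matrix n n ℝ} {x : ℕ → n → ℝ}
    {L : Matrix n n ℝ} {w : n → ℝ} (hA : Tendsto A atTop (nhds L))
    (hx : Tendsto x atTop (nhds w)) :
    Tendsto (fun T => A T *ᵥ x T) atTop (nhds (L *ᵥ w)) := by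
  rw [tendsto_pi_nhds]
  intro i
  have heq : ∀ T, (A T *ᵥ x T) i = ∑ j, A T i j * x T j := fun T => rfl
  have hw : (L *ᵥ w) i = ∑ j, L i j * w j := rfl
  simp only [heq, hw]
  exact tendsto_finset_sum _ fun j _ =>
    (tendsto_pi_nhds.1 (tendsto_pi_nhds.1 hA i) j).mul (tendsto_pi_nhds.1 hx j)

lemma tendsto_dot {n : Type*} [Fintype n] {x y : ℕ → n → ℝ} {a b : n → ℝ}
    (hx : Tendsto x atTop (nhds a)) (hy : Tendsto y atTop (nhds b)) :
    Tendsto (fun T => x T ⬝ᵥ y T) atTop (nhds (a ⬝ᵥ b)) := by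
  have heq : ∀ T, x T ⬝ᵥ y T = ∑ j, x T j * y T j := fun T => rfl
  have hw : a ⬝ᵥ b = ∑ j, a j * b j := rfl
  simp only [heq, hw]
  exact tendsto_finset_sum _ fun j _ =>
    (tendsto_pi_nhds.1 hx j).mul (tendsto_pi_nhds.1 hy j)

lemma dotSum {n : Type*} [Fintype n] {ι : Type*} (u : n → ℝ) (s : Finset ι) (f : ι → n → ℝ) :
    u ⬝ᵥ (∑ τ ∈ s, f τ) = ∑ τ ∈ s, u ⬝ᵥ f τ := by
  simp only [dotProduct, Finset.sum_apply, Finset.mul_sum]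
  exact Finset.sum_comm

lemma sumMulVec {n : Type*} [Fintype n] {ι : Type*} (s : Finset ι) (f : ι → Matrix n n ℝ)
    (u : n → ℝ) : (∑ τ ∈ s, f τ) *ᵥ u = ∑ τ ∈ s, f τ *ᵥ u := by
  ext i
  simp only [Matrix.mulVec, dotProduct, Matrix.sum_apply, Finset.sum_apply,
    Finset.sum_mul]
  exact Finset.sum_comm

lemma tendsto_div_nat (a : ℝ) : Tendsto (fun T : ℕ => a / (T : ℝ)) atTop (nhds 0) :=
  tendsto_const_nhds.div_atTop tendsto_natCast_atTop_atTop

lemma minorDel_posDef {K : ℕ} {S : Matrix (Fin K) (Fin K) ℝ} (hS : S.PosDef)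
    (hSsymm : S.IsSymm) (k : Fin K) : (minorDel S k).PosDef := by
  refine posDef_iff_dotProduct_mulVec.2 ⟨?_, ?_⟩
  · ext i j
    simp only [Matrix.conjTranspose_apply, minorDel, Matrix.of_apply, star_trivial]
    exact hSsymm.apply i.1 j.1
  · intro x hx
    set z : Fin K → ℝ := fun j => if hj : j = k then 0 else x ⟨j, hj⟩ with hz_def
    have hzk : z k = 0 := by simp [hz_def]
    have hzx : ∀ i : {j : Fin K // j ≠ k}, z i.1 = x i := by
      intro i
      show (if hj : (i:Fin K) = k then 0 else x ⟨i.1, hj⟩) = x i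
      rw [dif_neg i.2]
    have hz : z ≠ 0 := by
      obtain ⟨i, hi⟩ := Function.ne_iff.1 hx
      intro h0
      apply hi
      rw [← hzx i, h0]
      rfl
    have hinner : ∀ i : Fin K, (S *ᵥ z) i = ∑ j : {j : Fin K // j ≠ k}, S i j.1 * x j := by
      intro i
      show ∑ j, S i j * z j = _
      rw [sum_del k (fun j => S i j * z j) (by simp [hzk])]
      exact Finset.sum_congr rfl fun j _ => by rw [hzx]
    have hquad : star z ⬝ᵥ (S *ᵥ z) = star x ⬝ᵥ (minorDel S k *ᵥ x) := by
      show ∑ i, star (z i) * (S *ᵥ z) i = ∑ i : {j : Fin K // j ≠ k}, star (x i) * (minorDel S k *ᵥ x) i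
      simp only [star_trivial]
      rw [sum_del k (fun i => z i * (S *ᵥ z) i) (by simp [hzk])]
      refine Finset.sum_congr rfl fun i _ => ?_
      rw [hzx i, hinner]
      congr 1
    rw [← hquad]
    exact hS.dotProduct_mulVec_pos hz


lemma key {K : ℕ} (S : Matrix (Fin K) (Fin K) ℝ) (hS : S.PosDef) (hSsymm : S.IsSymm)
    (k : Fin K) (Λ : Matrix {j : Fin K // j ≠ k} {j : Fin K // j ≠ k} ℝ) (hΛ : Λ.PosDef)
    (ubar ellbar lamell : ℝ) (y : ℕ → Fin K → ℝ)
    (h : ∀ i j, Tendsto (fun T : ℕ => (∑ τ ∈ Finset.range T, y τ i * y τ j) / (T : ℝ))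
      atTop (nhds (S i j))) :
    Tendsto (fun T : ℕ => ellhatEst k Λ ubar ellbar lamell y T) atTop (nhds (ellCoef S k)) := by
  classical
  -- abbreviations
  set P : ℕ → Matrix {j : Fin K // j ≠ k} {j : Fin K // j ≠ k} ℝ :=
    fun T => ∑ τ ∈ Finset.range T, Matrix.vecMulVec (delVec (y τ) k) (delVec (y τ) k) with hP_def
  set s : ℕ → ({j : Fin K // j ≠ k} → ℝ) :=
    fun T => ∑ τ ∈ Finset.range T, y τ k • delVec (y τ) k with hs_def
  set M := minorDel S k with hM_def
  set c := colDel S k with hc_def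
  have hM : M.PosDef := minorDel_posDef hS hSsymm k
  have hdetM : M.det ≠ 0 := ne_of_gt hM.det_pos
  have hBpos : ∀ T, (Λ + P T).PosDef := fun T =>
    hΛ.add_posSemidef (posSemidef_sum _ _ fun τ _ => posSemidef_vecMulVec _)
  have hBdet : ∀ T, IsUnit (Λ + P T).det := fun T =>
    isUnit_iff_ne_zero.2 (ne_of_gt (hBpos T).det_pos)
  -- convergence of the averaged Gram matrix
  have hPlim : Tendsto (fun T : ℕ => (T : ℝ)⁻¹ • P T) atTop (nhds M) := by
    refine tendsto_pi_nhds.2 ?_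
    intro i
    rw [tendsto_pi_nhds]
    intro j
    have heq : (fun T : ℕ => ((T : ℝ)⁻¹ • P T) i j)
        = fun T => (∑ τ ∈ Finset.range T, y τ i.1 * y τ j.1) / (T : ℝ) := by
      funext T
      simp [hP_def, Matrix.smul_apply, Matrix.sum_apply, Matrix.vecMulVec_apply, delVec,
        div_eq_inv_mul, smul_eq_mul]
    show Tendsto (fun T : ℕ => ((T : ℝ)⁻¹ • P T) i j) atTop (nhds (M i j))
    rw [heq]
    exact h i.1 j.1
  have hZero : ∀ (w : {j : Fin K // j ≠ k} → ℝ),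
      Tendsto (fun T : ℕ => (T : ℝ)⁻¹ • w) atTop (nhds 0) := by
    intro w
    rw [tendsto_pi_nhds]
    intro i
    have heq : (fun T : ℕ => ((T : ℝ)⁻¹ • w) i) = fun T : ℕ => w i / (T : ℝ) := by
      funext T
      simp [div_eq_inv_mul]
    show Tendsto (fun T : ℕ => ((T : ℝ)⁻¹ • w) i) atTop (nhds ((0 : {j : Fin K // j ≠ k} → ℝ) i))
    rw [heq]
    exact tendsto_div_nat _
  have hZeroM : Tendsto (fun T : ℕ => (T : ℝ)⁻¹ • Λ) atTop (nhds 0) := by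
    refine tendsto_pi_nhds.2 ?_
    intro i
    rw [tendsto_pi_nhds]
    intro j
    have heq : (fun T : ℕ => ((T : ℝ)⁻¹ • Λ) i j) = fun T : ℕ => Λ i j / (T : ℝ) := by
      funext T
      simp [Matrix.smul_apply, div_eq_inv_mul, smul_eq_mul]
    show Tendsto (fun T : ℕ => ((T : ℝ)⁻¹ • Λ) i j) atTop
      (nhds ((0 : Matrix {j : Fin K // j ≠ k} {j : Fin K // j ≠ k} ℝ) i j))
    rw [heq]
    exact tendsto_div_nat _
  have hA'lim : Tendsto (fun T : ℕ => (T : ℝ)⁻¹ • (Λ + P T)) atTop (nhds M) := by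
    have := hZeroM.add hPlim
    rw [zero_add] at this
    refine this.congr fun T => ?_
    rw [smul_add]
  have hslim : Tendsto (fun T : ℕ => (T : ℝ)⁻¹ • s T) atTop (nhds c) := by
    rw [tendsto_pi_nhds]
    intro i
    have heq : (fun T : ℕ => ((T : ℝ)⁻¹ • s T) i)
        = fun T => (∑ τ ∈ Finset.range T, y τ k * y τ i.1) / (T : ℝ) := by
      funext T
      simp [hs_def, Finset.sum_apply, Pi.smul_apply, delVec, div_eq_inv_mul, smul_eq_mul]
    show Tendsto (fun T : ℕ => ((T : ℝ)⁻¹ • s T) i) atTop (nhds (c i))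
    rw [heq]
    have : c i = S k i.1 := hSsymm.apply k i.1
    rw [this]
    exact h k i.1
  have hblim : Tendsto (fun T : ℕ => (T : ℝ)⁻¹ • (Λ *ᵥ (fun _ => ubar) + s T)) atTop (nhds c) := by
    have := (hZero (Λ *ᵥ (fun _ => ubar))).add hslim
    rw [zero_add] at this
    refine this.congr fun T => ?_
    rw [smul_add]
  -- the estimator converges
  have hinv : Tendsto (fun T : ℕ => ((T : ℝ)⁻¹ • (Λ + P T))⁻¹) atTop (nhds M⁻¹) :=
    tendsto_matrix_inv hdetM hA'lim
  have hformula : ∀ T : ℕ, T ≠ 0 →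
      ((T : ℝ)⁻¹ • (Λ + P T))⁻¹ *ᵥ ((T : ℝ)⁻¹ • (Λ *ᵥ (fun _ => ubar) + s T))
        = uhatEst k Λ ubar y T := by
    intro T hT
    have hT' : (T : ℝ) ≠ 0 := Nat.cast_ne_zero.2 hT
    letI : Invertible ((T : ℝ)⁻¹) := invertibleOfNonzero (inv_ne_zero hT')
    rw [Matrix.inv_smul _ _ (hBdet T), invOf_eq_inv, inv_inv, Matrix.smul_mulVec,
      Matrix.mulVec_smul, smul_smul, mul_inv_cancel₀ hT', one_smul]
    rfl
  have hu : Tendsto (fun T : ℕ => uhatEst k Λ ubar y T) atTop (nhds (M⁻¹ *ᵥ c)) := by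
    refine (tendsto_mulVec hinv hblim).congr' ?_
    filter_upwards [eventually_ne_atTop 0] with T hT
    exact hformula T hT
  set u := M⁻¹ *ᵥ c with hu_def
  have hMu : M *ᵥ u = c := by
    rw [hu_def, Matrix.mulVec_mulVec, Matrix.mul_nonsing_inv _ (isUnit_iff_ne_zero.2 hdetM),
      Matrix.one_mulVec]
  -- denominator
  have hD : Tendsto (fun T : ℕ => lamell + K + ((T : ℝ) + 1)) atTop atTop :=
    tendsto_atTop_add_const_left _ _ (tendsto_atTop_add_const_right _ _
      tendsto_natCast_atTop_atTop)
  -- first summand tends to zero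
  have hq : Tendsto (fun T : ℕ => (uhatEst k Λ ubar y T - fun _ => ubar) ⬝ᵥ
      (Λ *ᵥ (uhatEst k Λ ubar y T - fun _ => ubar))) atTop
      (nhds ((u - fun _ => ubar) ⬝ᵥ (Λ *ᵥ (u - fun _ => ubar)))) :=
    tendsto_dot (hu.sub tendsto_const_nhds)
      (tendsto_mulVec tendsto_const_nhds (hu.sub tendsto_const_nhds))
  have hfirst : Tendsto (fun T : ℕ => ((lamell + K + 1) * ellbar
      + (uhatEst k Λ ubar y T - fun _ => ubar) ⬝ᵥ
        (Λ *ᵥ (uhatEst k Λ ubar y T - fun _ => ubar))) / (lamell + K + ((T : ℝ) + 1)))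
      atTop (nhds 0) :=
    (tendsto_const_nhds.add hq).div_atTop hD
  -- decomposition of the residual sum
  have hRdecomp : ∀ T : ℕ,
      ∑ τ ∈ Finset.range T, (y τ k - uhatEst k Λ ubar y T ⬝ᵥ delVec (y τ) k) ^ 2
        = (∑ τ ∈ Finset.range T, (y τ k) ^ 2)
          - 2 * (uhatEst k Λ ubar y T ⬝ᵥ s T)
          + uhatEst k Λ ubar y T ⬝ᵥ (P T *ᵥ uhatEst k Λ ubar y T) := by
    intro T
    have hdot1 : uhatEst k Λ ubar y T ⬝ᵥ s T
        = ∑ τ ∈ Finset.range T, y τ k * (uhatEst k Λ ubar y T ⬝ᵥ delVec (y τ) k) := by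
      rw [hs_def, dotSum]
      exact Finset.sum_congr rfl fun τ _ => by
        rw [dotProduct_smul, smul_eq_mul]
    have hdot2 : uhatEst k Λ ubar y T ⬝ᵥ (P T *ᵥ uhatEst k Λ ubar y T)
        = ∑ τ ∈ Finset.range T, (uhatEst k Λ ubar y T ⬝ᵥ delVec (y τ) k) ^ 2 := by
      rw [hP_def, sumMulVec, dotSum]
      refine Finset.sum_congr rfl fun τ _ => ?_
      rw [vecMulVec_mulVec', dotProduct_smul, smul_eq_mul, dotProduct_comm, sq]
    rw [hdot1, hdot2, Finset.mul_sum, ← Finset.sum_sub_distrib, ← Finset.sum_add_distrib]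
    exact Finset.sum_congr rfl fun τ _ => by ring
  -- second summand
  have hc1 : Tendsto (fun T : ℕ => (∑ τ ∈ Finset.range T, (y τ k) ^ 2) / (T : ℝ))
      atTop (nhds (S k k)) := by
    have := h k k
    refine this.congr fun T => ?_
    congr 1
    exact Finset.sum_congr rfl fun τ _ => (sq (y τ k)).symm
  have hc2 : Tendsto (fun T : ℕ => uhatEst k Λ ubar y T ⬝ᵥ ((T : ℝ)⁻¹ • s T)) atTop
      (nhds (u ⬝ᵥ c)) := tendsto_dot hu hslim
  have hc3 : Tendsto (fun T : ℕ => uhatEst k Λ ubar y T ⬝ᵥ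
      (((T : ℝ)⁻¹ • P T) *ᵥ uhatEst k Λ ubar y T)) atTop (nhds (u ⬝ᵥ (M *ᵥ u))) :=
    tendsto_dot hu (tendsto_mulVec hPlim hu)
  have hRT : Tendsto (fun T : ℕ =>
      (∑ τ ∈ Finset.range T, (y τ k - uhatEst k Λ ubar y T ⬝ᵥ delVec (y τ) k) ^ 2) / (T : ℝ))
      atTop (nhds (S k k - 2 * (u ⬝ᵥ c) + u ⬝ᵥ c)) := by
    have hlim := (hc1.sub (hc2.const_mul 2)).add hc3
    rw [hMu] at hlim
    refine hlim.congr fun T => ?_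
    rw [hRdecomp T]
    rw [add_div, sub_div]
    congr 1
    · congr 1
      rw [dotProduct_smul, smul_eq_mul, mul_div_assoc, div_eq_inv_mul (uhatEst k Λ ubar y T ⬝ᵥ s T)]
    · rw [Matrix.smul_mulVec, dotProduct_smul, smul_eq_mul, div_eq_inv_mul]
  have hTD : Tendsto (fun T : ℕ => (T : ℝ) / (lamell + K + ((T : ℝ) + 1))) atTop (nhds 1) := by
    have hlim : Tendsto (fun T : ℕ => 1 - (lamell + K + 1) / (lamell + K + ((T : ℝ) + 1)))
        atTop (nhds (1 - 0)) :=
      tendsto_const_nhds.sub (tendsto_const_nhds.div_atTop hD)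
    rw [sub_zero] at hlim
    refine hlim.congr' ?_
    filter_upwards [hD.eventually_ge_atTop 1] with T hT
    have hD0 : lamell + K + ((T : ℝ) + 1) ≠ 0 := by linarith
    field_simp
    ring
  have hsecond : Tendsto (fun T : ℕ =>
      (∑ τ ∈ Finset.range T, (y τ k - uhatEst k Λ ubar y T ⬝ᵥ delVec (y τ) k) ^ 2)
        / (lamell + K + ((T : ℝ) + 1))) atTop (nhds (S k k - u ⬝ᵥ c)) := by
    have hlim := hTD.mul hRT
    have heq : 1 * (S k k - 2 * (u ⬝ᵥ c) + u ⬝ᵥ c) = S k k - u ⬝ᵥ c := by ring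
    rw [heq] at hlim
    refine hlim.congr' ?_
    filter_upwards [eventually_ne_atTop 0] with T hT
    have hT' : (T : ℝ) ≠ 0 := Nat.cast_ne_zero.2 hT
    rw [div_mul_div_comm, mul_comm ((T : ℝ)) _, mul_div_mul_right _ _ hT']
  -- conclusion
  have htotal := hfirst.add hsecond
  rw [zero_add] at htotal
  have hrc : rowDel S k = c := by
    funext j
    exact hSsymm.apply j.1 k
  have hfinal : S k k - u ⬝ᵥ c = ellCoef S k := by
    rw [ellCoef, hrc, ← hM_def, ← hc_def, ← hu_def, dotProduct_comm]
  rw [← hfinal]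
  refine htotal.congr fun T => ?_
  rw [ellhatEst]
  ring

end BLRAux

/-- variance part of Lemma 4 of the paper.  The Bayesian linear
regression noise-variance estimates converge almost surely to the Schur complement
`ℓ^{(k)}_* = S_{k,k} − S_{k,-k} (S_{-k,-k})⁻¹ S_{-k,k}`. -/
theorem blr_variance_consistent
    {Ω : Type*} [MeasurableSpace Ω] (μ : Measure Ω) [IsProbabilityMeasure μ]
    (K : ℕ) (hK : 2 ≤ K)
    (Y : ℕ → Ω → Fin K → ℝ)
    (hmeas : ∀ t, Measurable (Y t))
    (hindep : iIndepFun Y μ)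
    (hident : ∀ t, IdentDistrib (Y t) (Y 0) μ μ)
    (hL2 : ∀ i, MemLp (fun ω => Y 0 ω i) 2 μ)
    (hmean : ∀ i, (∫ ω, Y 0 ω i ∂μ) = 0)
    (S : Matrix (Fin K) (Fin K) ℝ) (hS : S.PosDef) (hSsymm : S.IsSymm)
    (hcov : ∀ i j, (∫ ω, Y 0 ω i * Y 0 ω j ∂μ) = S i j)
    (k : Fin K)
    (Λ : Matrix {j : Fin K // j ≠ k} {j : Fin K // j ≠ k} ℝ)
    (hΛ : Λ.PosDef) (hΛsymm : Λ.IsSymm)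
    (ubar : ℝ) (ellbar : ℝ) (hellbar : 0 < ellbar) (lamell : ℝ) (hlamell : 0 ≤ lamell) :
    ∀ᵐ ω ∂μ, Tendsto (fun T => ellhatEst k Λ ubar ellbar lamell (fun t => Y t ω) T)
      atTop (nhds (ellCoef S k)) := by
  have hXij : ∀ p : Fin K × Fin K, ∀ᵐ ω ∂μ, Tendsto
      (fun T : ℕ => (∑ τ ∈ Finset.range T, Y τ ω p.1 * Y τ ω p.2) / (T : ℝ)) atTop
      (nhds (S p.1 p.2)) := by
    rintro ⟨i, j⟩
    have hmf : Measurable fun v : Fin K → ℝ => v i * v j :=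
      (measurable_pi_apply i).mul (measurable_pi_apply j)
    have hint : Integrable (fun ω => Y 0 ω i * Y 0 ω j) μ := by
      have hm := (hL2 j).smul (hL2 i) (p := 2) (q := 2) (r := 1)
        (hpqr := ⟨by rw [inv_one]; exact ENNReal.inv_two_add_inv_two⟩)
      exact memLp_one_iff_integrable.1 hm
    have hsl := ProbabilityTheory.strong_law_ae_real (fun t ω => Y t ω i * Y t ω j) hint
      (fun s t hst => ((hindep.indepFun hst).comp hmf hmf))
      (fun t => ((hident t).comp hmf))
    have hc : (μ[fun ω => Y 0 ω i * Y 0 ω j]) = S i j := hcov i j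
    rw [hc] at hsl
    exact hsl
  have hAE := (MeasureTheory.ae_all_iff).2 hXij
  filter_upwards [hAE] with ω hω
  exact BLRAux.key S hS hSsymm k Λ hΛ ubar ellbar lamell (fun t => Y t ω)
    (fun i j => hω (i, j))
end

section
/- Let K ≥ 1, v̄ > 0, and let Σ be a K×K symmetric positive definite matrix. Let Z be a real random variable and Δ an ℝ^K-valued random vector with E[Z] = 0, E[Z²] = v̄, E[Δ] = 0, E[ΔΔᵀ] = Σ, and E[ZΔ] = 0. Set Y = Z𝟏 + Δ and ν_* = v̄ (Σ + v̄𝟏𝟏ᵀ)⁻¹𝟏. Then for every ν ∈ ℝ^K: E[(Z − νᵀY)²] = 1/(v̄⁻¹ + 𝟏ᵀΣ⁻¹𝟏) + (ν_* − ν)ᵀ (Σ + v̄𝟏𝟏ᵀ) (ν_* − ν). -/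
open Matrix Finset MeasureTheory

/-- bias–variance decomposition, Appendix D.3 of the paper.  For any
weight vector `ν`, `E[(Z − νᵀY)²] = 1/(v̄⁻¹ + 𝟏ᵀΣ⁻¹𝟏) + (ν_* − ν)ᵀ(Σ + v̄𝟏𝟏ᵀ)(ν_* − ν)`. -/
theorem mse_decomposition
    {Ω : Type*} [MeasurableSpace Ω] (μ : Measure Ω) [IsProbabilityMeasure μ]
    (K : ℕ) (hK : 1 ≤ K)
    (vbar : ℝ) (hv : 0 < vbar)
    (Sig : Matrix (Fin K) (Fin K) ℝ) (hSig : Sig.PosDef) (hSigsymm : Sig.IsSymm)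
    (Z : Ω → ℝ) (Δ : Ω → Fin K → ℝ)
    (hZint : Integrable Z μ) (hZ2int : Integrable (fun ω => Z ω ^ 2) μ)
    (hΔint : ∀ i, Integrable (fun ω => Δ ω i) μ)
    (hΔ2int : ∀ i j, Integrable (fun ω => Δ ω i * Δ ω j) μ)
    (hZΔint : ∀ i, Integrable (fun ω => Z ω * Δ ω i) μ)
    (hZmean : (∫ ω, Z ω ∂μ) = 0) (hZvar : (∫ ω, Z ω ^ 2 ∂μ) = vbar)
    (hΔmean : ∀ i, (∫ ω, Δ ω i ∂μ) = 0)
    (hΔcov : ∀ i j, (∫ ω, Δ ω i * Δ ω j ∂μ) = Sig i j)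
    (hZΔ : ∀ i, (∫ ω, Z ω * Δ ω i ∂μ) = 0)
    (Y : Ω → Fin K → ℝ) (hY : ∀ ω, Y ω = (fun _ => Z ω) + Δ ω)
    (νstar : Fin K → ℝ)
    (hνstar : νstar = vbar •
      ((Sig + vbar • Matrix.vecMulVec (fun _ => (1 : ℝ)) (fun _ => (1 : ℝ)))⁻¹
        *ᵥ fun _ => (1 : ℝ))) :
    ∀ ν : Fin K → ℝ,
      (∫ ω, (Z ω - ν ⬝ᵥ Y ω) ^ 2 ∂μ)
        = 1 / (vbar⁻¹ + (fun _ => (1 : ℝ)) ⬝ᵥ (Sig⁻¹ *ᵥ fun _ => (1 : ℝ)))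
          + (νstar - ν) ⬝ᵥ
            ((Sig + vbar • Matrix.vecMulVec (fun _ => (1 : ℝ)) (fun _ => (1 : ℝ)))
              *ᵥ (νstar - ν)) := by
  intro ν
  set one : Fin K → ℝ := fun _ => (1 : ℝ) with hone
  set A : Matrix (Fin K) (Fin K) ℝ := Sig + vbar • Matrix.vecMulVec one one with hAdef
  set t : ℝ := ∑ i, ν i with ht
  set s : ℝ := one ⬝ᵥ (Sig⁻¹ *ᵥ one) with hs
  -- ### Step 1: compute the integral
  have hpt : ∀ ω, (Z ω - ν ⬝ᵥ Y ω) ^ 2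
      = (1 - t) ^ 2 * Z ω ^ 2 - (2 * (1 - t)) * (∑ i, ν i * (Z ω * Δ ω i))
        + ∑ i, ∑ j, (ν i * ν j) * (Δ ω i * Δ ω j) := by
    intro ω
    have hdot : ν ⬝ᵥ Y ω = t * Z ω + ∑ i, ν i * Δ ω i := by
      simp only [hY, dotProduct, Pi.add_apply, mul_add, Finset.sum_add_distrib, ht,
        Finset.sum_mul]
    rw [hdot]
    have e1 : (∑ i, ν i * Δ ω i) ^ 2 = ∑ i, ∑ j, (ν i * ν j) * (Δ ω i * Δ ω j) := by
      rw [sq, Finset.sum_mul_sum]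
      exact Finset.sum_congr rfl fun i _ => Finset.sum_congr rfl fun j _ => by ring
    have e2 : Z ω * (∑ i, ν i * Δ ω i) = ∑ i, ν i * (Z ω * Δ ω i) := by
      rw [Finset.mul_sum]
      exact Finset.sum_congr rfl fun i _ => by ring
    calc (Z ω - (t * Z ω + ∑ i, ν i * Δ ω i)) ^ 2
        = (1 - t) ^ 2 * Z ω ^ 2 - (2 * (1 - t)) * (Z ω * ∑ i, ν i * Δ ω i)
            + (∑ i, ν i * Δ ω i) ^ 2 := by ring
      _ = _ := by rw [e1, e2]
  have hI1 : Integrable (fun ω => (1 - t) ^ 2 * Z ω ^ 2) μ := hZ2int.const_mul _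
  have hI2 : Integrable (fun ω => (2 * (1 - t)) * (∑ i, ν i * (Z ω * Δ ω i))) μ :=
    (integrable_finset_sum _ fun i _ => (hZΔint i).const_mul _).const_mul _
  have hI3 : Integrable (fun ω => ∑ i, ∑ j, (ν i * ν j) * (Δ ω i * Δ ω j)) μ :=
    integrable_finset_sum _ fun i _ => integrable_finset_sum _ fun j _ =>
      (hΔ2int i j).const_mul _
  have hLHS : (∫ ω, (Z ω - ν ⬝ᵥ Y ω) ^ 2 ∂μ)
      = (1 - t) ^ 2 * vbar + ∑ i, ∑ j, (ν i * ν j) * Sig i j := by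
    calc (∫ ω, (Z ω - ν ⬝ᵥ Y ω) ^ 2 ∂μ)
        = ∫ ω, ((1 - t) ^ 2 * Z ω ^ 2 - (2 * (1 - t)) * (∑ i, ν i * (Z ω * Δ ω i))
            + ∑ i, ∑ j, (ν i * ν j) * (Δ ω i * Δ ω j)) ∂μ := by
          exact integral_congr_ae (Filter.Eventually.of_forall hpt)
      _ = (∫ ω, (1 - t) ^ 2 * Z ω ^ 2 ∂μ)
            - (∫ ω, (2 * (1 - t)) * (∑ i, ν i * (Z ω * Δ ω i)) ∂μ)
            + ∫ ω, ∑ i, ∑ j, (ν i * ν j) * (Δ ω i * Δ ω j) ∂μ := by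
          have hI12 : Integrable (fun ω => (1 - t) ^ 2 * Z ω ^ 2
              - (2 * (1 - t)) * (∑ i, ν i * (Z ω * Δ ω i))) μ := hI1.sub hI2
          rw [integral_add hI12 hI3, integral_sub hI1 hI2]
      _ = (1 - t) ^ 2 * vbar + ∑ i, ∑ j, (ν i * ν j) * Sig i j := by
          rw [integral_const_mul, hZvar, integral_const_mul]
          rw [integral_finset_sum _ fun i _ => (hZΔint i).const_mul _]
          rw [integral_finset_sum _ fun i _ => integrable_finset_sum _ fun j _ =>
            (hΔ2int i j).const_mul _]
          simp only [integral_const_mul, hZΔ, mul_zero, Finset.sum_const_zero, sub_zero]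
          congr 1
          exact Finset.sum_congr rfl fun i _ => by
            rw [integral_finset_sum _ fun j _ => (hΔ2int i j).const_mul _]
            exact Finset.sum_congr rfl fun j _ => by rw [integral_const_mul, hΔcov]
  -- ### Step 2: linear algebra facts
  have hSigdet : IsUnit Sig.det := hSig.det_pos.ne'.isUnit
  have hBsemi : (vbar • Matrix.vecMulVec one one : Matrix (Fin K) (Fin K) ℝ).PosSemidef := by
    refine posSemidef_iff_dotProduct_mulVec.mpr ⟨?_, ?_⟩
    · ext i j
      simp [conjTranspose_apply, vecMulVec_apply, hone]
    · intro x
      have h : star x ⬝ᵥ ((vbar • Matrix.vecMulVec one one) *ᵥ x)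
          = vbar * (∑ i, x i) ^ 2 := by
        simp only [star_trivial, dotProduct, mulVec, Matrix.smul_apply, vecMulVec_apply,
          smul_eq_mul, Finset.mul_sum, Finset.sum_mul, sq, hone]
        rw [Finset.sum_comm]
        exact Finset.sum_congr rfl fun i _ => Finset.sum_congr rfl fun j _ => by ring
      rw [h]; positivity
  have hA : A.PosDef := hSig.add_posSemidef hBsemi
  have hAdet : IsUnit A.det := hA.det_pos.ne'.isUnit
  have hs0 : 0 ≤ s := by
    have := hSig.inv.posSemidef.dotProduct_mulVec_nonneg one
    simpa [hs, dotProduct] using this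
  have hden : (0 : ℝ) < 1 + vbar * s := by positivity
  have hvec : ∀ x : Fin K → ℝ, Matrix.vecMulVec one one *ᵥ x = (one ⬝ᵥ x) • one := by
    intro x
    funext i
    simp only [mulVec, vecMulVec_apply, dotProduct, Pi.smul_apply, smul_eq_mul,
      Finset.sum_mul, Finset.mul_sum]
    exact Finset.sum_congr rfl fun j _ => by ring
  have hAone : A⁻¹ *ᵥ one = (1 + vbar * s)⁻¹ • (Sig⁻¹ *ᵥ one) := by
    have hx : A *ᵥ ((1 + vbar * s)⁻¹ • (Sig⁻¹ *ᵥ one)) = one := by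
      rw [Matrix.mulVec_smul, hAdef, Matrix.add_mulVec, Matrix.smul_mulVec, hvec,
        Matrix.mulVec_mulVec, Matrix.mul_nonsing_inv _ hSigdet, Matrix.one_mulVec, ← hs]
      funext i
      simp only [Pi.smul_apply, Pi.add_apply, smul_eq_mul, hone]
      field_simp
    calc A⁻¹ *ᵥ one = A⁻¹ *ᵥ (A *ᵥ ((1 + vbar * s)⁻¹ • (Sig⁻¹ *ᵥ one))) := by rw [hx]
      _ = (A⁻¹ * A) *ᵥ ((1 + vbar * s)⁻¹ • (Sig⁻¹ *ᵥ one)) := by rw [Matrix.mulVec_mulVec]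
      _ = _ := by rw [Matrix.nonsing_inv_mul _ hAdet, Matrix.one_mulVec]
  have hAνstar : A *ᵥ νstar = vbar • one := by
    rw [hνstar, Matrix.mulVec_smul, Matrix.mulVec_mulVec, Matrix.mul_nonsing_inv _ hAdet,
      Matrix.one_mulVec]
  have hνstarone : one ⬝ᵥ νstar = vbar * s * (1 + vbar * s)⁻¹ := by
    rw [hνstar, hAone]
    simp only [dotProduct_smul, smul_eq_mul, ← hs]
    ring
  have hAsymm : Aᵀ = A := by
    have hvT : (Matrix.vecMulVec one one)ᵀ = Matrix.vecMulVec one one := by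
      ext i j; simp [vecMulVec_apply, transpose_apply]; exact mul_comm _ _
    rw [hAdef, Matrix.transpose_add, Matrix.transpose_smul, hSigsymm.eq, hvT]
  have hsymmdot : ∀ u w : Fin K → ℝ, u ⬝ᵥ (A *ᵥ w) = (A *ᵥ u) ⬝ᵥ w := by
    intro u w
    rw [Matrix.dotProduct_mulVec, ← Matrix.mulVec_transpose, hAsymm]
  have hνone : ν ⬝ᵥ one = t := by simp [dotProduct, hone, ht]
  have honeν : one ⬝ᵥ ν = t := by simp [dotProduct, hone, ht]
  have hQ : ν ⬝ᵥ (Sig *ᵥ ν) = ∑ i, ∑ j, (ν i * ν j) * Sig i j := by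
    simp only [dotProduct, mulVec, Finset.mul_sum]
    exact Finset.sum_congr rfl fun i _ => Finset.sum_congr rfl fun j _ => by ring
  have hνAν : ν ⬝ᵥ (A *ᵥ ν) = ν ⬝ᵥ (Sig *ᵥ ν) + vbar * t ^ 2 := by
    rw [hAdef, Matrix.add_mulVec, dotProduct_add, Matrix.smul_mulVec, hvec,
      honeν]
    simp only [dotProduct_smul, smul_eq_mul, hνone]
    ring
  -- expand the RHS quadratic form
  have hRHS : (νstar - ν) ⬝ᵥ (A *ᵥ (νstar - ν))
      = vbar * (vbar * s * (1 + vbar * s)⁻¹) - 2 * (vbar * t)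
        + (ν ⬝ᵥ (Sig *ᵥ ν) + vbar * t ^ 2) := by
    have h1 : νstar ⬝ᵥ (A *ᵥ νstar) = vbar * (vbar * s * (1 + vbar * s)⁻¹) := by
      rw [hAνstar, dotProduct_smul, smul_eq_mul, dotProduct_comm, hνstarone]
    have h2 : ν ⬝ᵥ (A *ᵥ νstar) = vbar * t := by
      rw [hAνstar, dotProduct_smul, smul_eq_mul, hνone]
    have h3 : νstar ⬝ᵥ (A *ᵥ ν) = vbar * t := by
      rw [hsymmdot, hAνstar, smul_dotProduct, smul_eq_mul, honeν]
    rw [Matrix.mulVec_sub, dotProduct_sub, sub_dotProduct,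
      sub_dotProduct, h1, h2, h3, hνAν]
    ring
  -- ### Step 3: put everything together
  rw [hLHS, hRHS, ← hQ]
  have hkey : (1 - t) ^ 2 * vbar
      = 1 / (vbar⁻¹ + s) + (vbar * (vbar * s * (1 + vbar * s)⁻¹) - 2 * (vbar * t)
          + vbar * t ^ 2) := by
    have hv' : vbar ≠ 0 := hv.ne'
    have h1 : vbar⁻¹ + s ≠ 0 := by positivity
    field_simp
    ring
  linarith [hkey]
end
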